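/- Consider one online vertex v with patience 2 and offline vertices u_1,u_2,u_3,u_4 with weights w_1 = 1+ε, w_2 = 1+ε/2, w_3 = w_4 = 1 (with 0 < ε ≤ 1/12) and edge probabilities p_1 = 1/3, p_2 = 1, p_3 = 1/2, p_4 = 2/3. Then among ordered pairs of distinct edges, probing (u_1,v) then (u_2,v) maximizes expected reward when all four offline vertices are available: p_1 w_1 + (1-p_1) p_2 w_2 exceeds the value of every other feasible probing sequence of length at most 2; however, when u_2 is removed, the optimal sequence probes (u_3,v) then (u_4,v) and does not probe (u_1,v): p_3 w_3 + (1-p_3) p_4 w_4 > p_1 w_1 + (1-p_1) p_3 w_3 and similarly exceeds all sequences containing edge (u_1,v). -/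
import Mathlib


/-- with weights `w = (1+ε, 1+ε/2, 1, 1)` (for `0 < ε ≤ 1/12`) and
probabilities `p = (1/3, 1, 1/2, 2/3)`, probing `(u₁,v)` then `(u₂,v)` is the
unique maximizer of the expected reward over all probing sequences of length at
most `2` when all offline vertices are available; but when `u₂` is removed, the
sequence `(u₃,v),(u₄,v)` strictly beats every sequence (of length at most 2)
containing the edge `(u₁,v)`. -/
theorem optimal_probe_changes_under_removal (ε : ℝ) (hε : 0 < ε) (hε' : ε ≤ 1 / 12) :
    let w : Fin 4 → ℝ := ![1 + ε, 1 + ε / 2, 1, 1]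
    let p : Fin 4 → ℝ := ![1 / 3, 1, 1 / 2, 2 / 3]
    let val2 : Fin 4 → Fin 4 → ℝ := fun i j => p i * w i + (1 - p i) * p j * w j
    -- (u₁,v) then (u₂,v) beats every other ordered pair of distinct edges
    (∀ i j : Fin 4, i ≠ j → (i, j) ≠ ((0 : Fin 4), (1 : Fin 4)) →
        val2 0 1 > val2 i j) ∧
    -- and it beats every single probe (hence every sequence of length ≤ 1)
    (∀ i : Fin 4, val2 0 1 > p i * w i) ∧ val2 0 1 > 0 ∧
    -- with u₂ removed, (u₃,v) then (u₄,v) beats every pair using edge (u₁,v)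
    (∀ i j : Fin 4, i ≠ j → i ≠ 1 → j ≠ 1 → (i = 0 ∨ j = 0) →
        val2 2 3 > val2 i j) ∧
    val2 2 3 > p 0 * w 0 := by
  intro w p val2
  refine ⟨?_, ?_, ?_, ?_, ?_⟩
  · intro i j hij hne
    fin_cases i <;> fin_cases j <;>
      simp_all [val2, p, w, Fin.ext_iff] <;> nlinarith
  · intro i
    fin_cases i <;> simp [val2, p, w] <;> nlinarith
  · simp [val2, p, w]; nlinarith
  · intro i j hij hi hj h0
    fin_cases i <;> fin_cases j <;>
      simp_all [val2, p, w, Fin.ext_iff] <;>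
      first
        | nlinarith
        | (exact absurd h0 (by decide))
  · simp [val2, p, w]; nlinarith
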